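/- Let X1, X2 be independent Uniform(0,1) random variables, X = (X1,X2)^T, and α0 = (1/√2, 1/√2)^T. Then the conditional covariance matrix E[Cov(X | α0^T X)] equals the 2×2 matrix with entries 1/24 on the diagonal and -1/24 off the diagonal. -/

import Mathlib

/-!
Swapping the coordinates preserves the law of `(X₁, X₂)` and fixes `S = (X₁ + X₂) / √2`, so
`X₁` and `X₂` have the same integral over every `σ(S)`-measurable set, i.e. `E[X₁ | S] = E[X₂ | S]`.
Since `X₁ + X₂ = √2 S` is `σ(S)`-measurable, both conditional expectations equal `(X₁ + X₂) / 2`.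
The residuals are then `±(X₁ - X₂) / 2`, so the matrix is `E[(X₁ - X₂)²] / 4 • !![1, -1; -1, 1]`,
and `E[(X₁ - X₂)²] = 2 Var[X₁] = 1 / 6` by independence.
-/

open MeasureTheory ProbabilityTheory

section

variable {Ω : Type*} {mΩ : MeasurableSpace Ω} {μ : Measure Ω} {X Y : Ω → ℝ}

lemma ProbabilityTheory.IndepFun.identDistrib_prod_swap [IsFiniteMeasure μ]
    (hind : IndepFun X Y μ) (hid : IdentDistrib X Y μ μ) :
    IdentDistrib (fun ω => (X ω, Y ω)) (fun ω => (Y ω, X ω)) μ μ where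
  aemeasurable_fst := hid.aemeasurable_fst.prodMk hid.aemeasurable_snd
  aemeasurable_snd := hid.aemeasurable_snd.prodMk hid.aemeasurable_fst
  map_eq := by
    rw [hind.map_prod_eq_prod_map_map hid.aemeasurable_fst hid.aemeasurable_snd,
      hind.symm.map_prod_eq_prod_map_map hid.aemeasurable_snd hid.aemeasurable_fst, hid.map_eq]

lemma setIntegral_eq_of_identDistrib_prod_swap {β : Type*} [mβ : MeasurableSpace β]
    (hX : Measurable X) (hY : Measurable Y)
    (hswap : IdentDistrib (fun ω => (X ω, Y ω)) (fun ω => (Y ω, X ω)) μ μ)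
    {φ : ℝ × ℝ → β} (hφ : Measurable φ) (hφ_symm : ∀ a b, φ (a, b) = φ (b, a))
    (s : Set Ω) (hs : MeasurableSet[MeasurableSpace.comap (fun ω => φ (X ω, Y ω)) mβ] s) :
    ∫ ω in s, X ω ∂μ = ∫ ω in s, Y ω ∂μ := by
  obtain ⟨B, hB, rfl⟩ := hs
  have hs : MeasurableSet ((fun ω => φ (X ω, Y ω)) ⁻¹' B) := hφ.comp (hX.prodMk hY) hB
  set g : ℝ × ℝ → ℝ := (φ ⁻¹' B).indicator Prod.fst
  have hg : Measurable g := measurable_fst.indicator (hφ hB)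
  calc ∫ ω in (fun ω => φ (X ω, Y ω)) ⁻¹' B, X ω ∂μ
      = ∫ ω, g (X ω, Y ω) ∂μ := by rw [← integral_indicator hs]; rfl
    _ = ∫ ω, g (Y ω, X ω) ∂μ := (hswap.comp hg).integral_eq
    _ = ∫ ω in (fun ω => φ (X ω, Y ω)) ⁻¹' B, Y ω ∂μ := by
      rw [← integral_indicator hs]
      congr 1 with ω
      by_cases h : φ (X ω, Y ω) ∈ B <;> simp [g, h, hφ_symm (Y ω) (X ω)]

lemma condExp_ae_eq_half_add {m : MeasurableSpace Ω} (hm : m ≤ mΩ) [SigmaFinite (μ.trim hm)]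
    (hX : Integrable X μ) (hY : Integrable Y μ) (hsum : StronglyMeasurable[m] (X + Y))
    (hXY : ∀ s, MeasurableSet[m] s → ∫ ω in s, X ω ∂μ = ∫ ω in s, Y ω ∂μ) :
    μ[X | m] =ᵐ[μ] fun ω => (X ω + Y ω) / 2 := by
  have hYX : μ[Y | m] =ᵐ[μ] μ[X | m] :=
    ae_eq_condExp_of_forall_setIntegral_eq hm hX (fun _ _ _ => integrable_condExp.integrableOn)
      (fun s hs _ => (setIntegral_condExp hm hY hs).trans (hXY s hs).symm)
      stronglyMeasurable_condExp.aestronglyMeasurable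
  have hadd : μ[X + Y | m] =ᵐ[μ] μ[X | m] + μ[Y | m] := condExp_add hX hY m
  rw [condExp_of_stronglyMeasurable hm hsum (hX.add hY)] at hadd
  filter_upwards [hYX, hadd] with ω hω hω'
  simp only [Pi.add_apply, hω] at hω'
  linarith

lemma of_integral_mul_eq_smul_vecMulVec {ι : Type*} {R : ι → Ω → ℝ} {D : Ω → ℝ} (c : ι → ℝ)
    (hR : ∀ i, R i =ᵐ[μ] fun ω => c i * D ω) :
    Matrix.of (fun i j => ∫ ω, R i ω * R j ω ∂μ) = (∫ ω, D ω ^ 2 ∂μ) • Matrix.vecMulVec c c := by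
  ext i j
  simp only [Matrix.of_apply, Matrix.smul_apply, Matrix.vecMulVec_apply, smul_eq_mul]
  refine (integral_congr_ae ((hR i).mul (hR j))).trans ?_
  rw [← integral_mul_const]
  congr 1 with ω
  simp only [Pi.mul_apply]
  ring

lemma integral_sub_sq_of_indepFun_identDistrib [IsProbabilityMeasure μ]
    (hind : IndepFun X Y μ) (hid : IdentDistrib X Y μ μ) (hX : MemLp X 2 μ) :
    ∫ ω, (X ω - Y ω) ^ 2 ∂μ = 2 * Var[X; μ] := by
  have hY := hid.memLp_snd hX
  have hmean : μ[fun ω => X ω - Y ω] = 0 := by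
    rw [integral_sub (hX.integrable one_le_two) (hY.integrable one_le_two), hid.integral_eq,
      sub_self]
  rw [← variance_of_integral_eq_zero (X := fun ω => X ω - Y ω)
      (hX.aemeasurable.sub hY.aemeasurable) hmean,
    variance_fun_sub hX hY, hind.covariance_eq_zero hX hY, ← hid.variance_eq]
  ring

lemma memLp_id_volume_restrict_Ioc (a b : ℝ) (p : ENNReal) :
    MemLp id p (volume.restrict (Set.Ioc a b)) :=
  MemLp.of_bound measurable_id.aestronglyMeasurable (max |a| |b|)
    ((ae_restrict_mem measurableSet_Ioc).mono fun _ hx => abs_le_max_abs_abs hx.1.le hx.2)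

lemma memLp_of_map_eq_volume_restrict_Ioc {a b : ℝ} (hX : Measurable X)
    (hu : μ.map X = volume.restrict (Set.Ioc a b)) (p : ENNReal) : MemLp X p μ :=
  (hu ▸ memLp_id_volume_restrict_Ioc a b p).comp_of_map hX.aemeasurable

lemma variance_id_volume_restrict_Ioc_zero_one :
    Var[id; volume.restrict (Set.Ioc (0 : ℝ) 1)] = 1 / 12 := by
  have hmean : ∫ x in Set.Ioc (0 : ℝ) 1, x = 1 / 2 := by
    rw [← intervalIntegral.integral_of_le zero_le_one, integral_id]
    norm_num
  rw [variance_eq_integral measurable_id.aemeasurable]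
  simp only [id, hmean]
  rw [← intervalIntegral.integral_of_le zero_le_one, intervalIntegral.integral_comp_sub_right
    fun x => x ^ 2, integral_pow]
  norm_num

lemma integral_sub_sq_of_indepFun_of_map_eq_volume_restrict_Ioc_zero_one
    [IsProbabilityMeasure μ] (hX : Measurable X) (hY : Measurable Y)
    (huX : μ.map X = volume.restrict (Set.Ioc (0:ℝ) 1))
    (huY : μ.map Y = volume.restrict (Set.Ioc (0:ℝ) 1)) (hind : IndepFun X Y μ) :
    ∫ ω, (X ω - Y ω) ^ 2 ∂μ = 1 / 6 := by
  rw [integral_sub_sq_of_indepFun_identDistrib hind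
      ⟨hX.aemeasurable, hY.aemeasurable, huX.trans huY.symm⟩
      (memLp_of_map_eq_volume_restrict_Ioc hX huX 2),
    ← variance_id_map hX.aemeasurable, huX, variance_id_volume_restrict_Ioc_zero_one]
  norm_num

end

theorem stmt0
    {Ω : Type*} [MeasurableSpace Ω] (μ : Measure Ω) [IsProbabilityMeasure μ]
    (X1 X2 : Ω → ℝ) (hX1 : Measurable X1) (hX2 : Measurable X2)
    (hu1 : μ.map X1 = volume.restrict (Set.Ioc (0:ℝ) 1))
    (hu2 : μ.map X2 = volume.restrict (Set.Ioc (0:ℝ) 1))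
    (hind : IndepFun X1 X2 μ)
    (S : Ω → ℝ) (hS : S = fun ω => (X1 ω + X2 ω) / Real.sqrt 2)
    (m : MeasurableSpace Ω) (hm : m = MeasurableSpace.comap S Real.measurableSpace)
    (X : Fin 2 → Ω → ℝ) (hX : X = ![X1, X2]) :
    (Matrix.of fun i j : Fin 2 =>
        ∫ ω, (X i ω - (μ[X i | m]) ω) * (X j ω - (μ[X j | m]) ω) ∂μ)
      = !![(1:ℝ)/24, -1/24; -1/24, 1/24] := by
  subst hX hm hS
  have hS_meas : Measurable fun ω => (X1 ω + X2 ω) / Real.sqrt 2 := by fun_prop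
  have hint1 : Integrable X1 μ := memLp_one_iff_integrable.1 <|
    memLp_of_map_eq_volume_restrict_Ioc hX1 hu1 1
  have hint2 : Integrable X2 μ := memLp_one_iff_integrable.1 <|
    memLp_of_map_eq_volume_restrict_Ioc hX2 hu2 1
  have hsum : StronglyMeasurable[MeasurableSpace.comap (fun ω => (X1 ω + X2 ω) / Real.sqrt 2)
      Real.measurableSpace] (X1 + X2) := by
    have : X1 + X2 = fun ω => Real.sqrt 2 * ((X1 ω + X2 ω) / Real.sqrt 2) :=
      funext fun ω => (mul_div_cancel₀ _ (by positivity)).symm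
    exact this ▸ ((comap_measurable _).const_mul _).stronglyMeasurable
  have hswap :=
    hind.identDistrib_prod_swap ⟨hX1.aemeasurable, hX2.aemeasurable, hu1.trans hu2.symm⟩
  have hsymm := setIntegral_eq_of_identDistrib_prod_swap hX1 hX2 hswap
    (φ := fun p => (p.1 + p.2) / Real.sqrt 2) (by fun_prop) (fun a b => by rw [add_comm])
  have hc1 := condExp_ae_eq_half_add hS_meas.comap_le hint1 hint2 hsum hsymm
  have hc2 := condExp_ae_eq_half_add hS_meas.comap_le hint2 hint1 (add_comm X1 X2 ▸ hsum)
    fun s hs => (hsymm s hs).symm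
  rw [of_integral_mul_eq_smul_vecMulVec ![1 / 2, -1 / 2] (D := fun ω => X1 ω - X2 ω),
    integral_sub_sq_of_indepFun_of_map_eq_volume_restrict_Ioc_zero_one hX1 hX2 hu1 hu2 hind]
  · ext i j
    fin_cases i <;> fin_cases j <;> norm_num [Matrix.vecMulVec_apply]
  · refine Fin.forall_fin_two.2 ⟨?_, ?_⟩
    · filter_upwards [hc1] with ω h
      simp only [Matrix.cons_val_zero, h]
      ring
    · filter_upwards [hc2] with ω h
      simp only [Matrix.cons_val_one, Matrix.cons_val_zero, h]
      ring
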